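/- Let Q_igc(U) = tr(Uᵀ ¬D̃^{-1/2}(¬D̃ − ¬Ã)¬D̃^{-1/2} U). Then the gradient descent step U' = U − (1/2)·∇Q_igc(U) equals U' = (¬D̃^{-1/2} ¬Ã ¬D̃^{-1/2}) U; i.e., the IGC update is gradient descent on Q_igc with step size 1/2. -/

import Mathlib

/-! The normalised matrix `D̃^{-1/2} D̃ D̃^{-1/2}` is the identity, because every `d̃ᵢ = dᵢ + 2` is
positive. Hence `D̃^{-1/2}(D̃ - Ã)D̃^{-1/2} = I - D̃^{-1/2} Ã D̃^{-1/2}`, and a gradient step of size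
`1/2` on `Q_igc` removes exactly the identity part, leaving the IGC filter applied to `U`. -/

open Matrix

lemma sum_row_nonneg_of_zero_or_one {m ι : Type*} [Fintype ι] {A : Matrix m ι ℝ}
    (h01 : ∀ i j, A i j = 0 ∨ A i j = 1) (i : m) : 0 ≤ ∑ j, A i j :=
  Finset.sum_nonneg fun j _ => by rcases h01 i j with h | h <;> simp [h]

lemma diagonal_inv_sqrt_mul_diagonal_mul_diagonal_inv_sqrt {ι : Type*} [Fintype ι]
    [DecidableEq ι] {a : ι → ℝ} (ha : ∀ i, 0 < a i) :
    diagonal (fun i => 1 / √(a i)) * diagonal a * diagonal (fun i => 1 / √(a i)) = 1 := by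
  rw [diagonal_mul_diagonal, diagonal_mul_diagonal, ← diagonal_one]
  congr 1
  funext i
  have hsqrt_ne : √(a i) ≠ 0 := (Real.sqrt_pos.2 (ha i)).ne'
  field_simp
  exact (Real.sq_sqrt (ha i).le).symm

lemma sub_half_smul_grad_eq_of_mul_mul_eq_one {m k : Type*} [Fintype m] [DecidableEq m]
    {S D B : Matrix m m ℝ} (hSDS : S * D * S = 1) (U : Matrix m k ℝ) :
    U - (1 / 2 : ℝ) • ((2 : ℝ) • (S * (D - B) * S * U)) = S * B * S * U := by
  have hsplit : S * (D - B) * S = 1 - S * B * S := by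
    rw [Matrix.mul_sub, Matrix.sub_mul, hSDS]
  rw [smul_smul, hsplit, Matrix.sub_mul, Matrix.one_mul]
  norm_num

theorem stmt13_general (n d : ℕ) (A : Matrix (Fin n) (Fin n) ℝ)
    (h01 : ∀ i j, A i j = 0 ∨ A i j = 1)
    (deg : Fin n → ℝ) (hdeg : ∀ i, deg i = ∑ j, A i j)
    (At Dt Dh : Matrix (Fin n) (Fin n) ℝ)
    (hDt : Dt = (2 : ℝ) • (1 : Matrix (Fin n) (Fin n) ℝ) + Matrix.diagonal deg)
    (hDh : Dh = Matrix.diagonal (fun i => 1 / Real.sqrt (deg i + 2)))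
    (U : Matrix (Fin n) (Fin d) ℝ) :
    U - (1 / 2 : ℝ) • ((2 : ℝ) • (Dh * (Dt - At) * Dh * U)) = Dh * At * Dh * U := by
  have hpos : ∀ i, 0 < deg i + 2 := fun i => by
    linarith [hdeg i ▸ sum_row_nonneg_of_zero_or_one h01 i]
  have hDt_diag : Dt = diagonal (fun i => deg i + 2) := by
    rw [hDt, smul_one_eq_diagonal, diagonal_add]
    simp only [add_comm]
  apply sub_half_smul_grad_eq_of_mul_mul_eq_one
  rw [hDh, hDt_diag]
  exact diagonal_inv_sqrt_mul_diagonal_mul_diagonal_inv_sqrt hpos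

theorem stmt13 (n d : ℕ) (A : Matrix (Fin n) (Fin n) ℝ)
    (hsym : A.IsSymm) (h01 : ∀ i j, A i j = 0 ∨ A i j = 1) (hdiag : ∀ i, A i i = 0)
    (deg : Fin n → ℝ) (hdeg : ∀ i, deg i = ∑ j, A i j)
    (At Dt Dh : Matrix (Fin n) (Fin n) ℝ)
    (hAt : At = (2 : ℝ) • (1 : Matrix (Fin n) (Fin n) ℝ) - A)
    (hDt : Dt = (2 : ℝ) • (1 : Matrix (Fin n) (Fin n) ℝ) + Matrix.diagonal deg)
    (hDh : Dh = Matrix.diagonal (fun i => 1 / Real.sqrt (deg i + 2)))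
    (U : Matrix (Fin n) (Fin d) ℝ) :
    U - (1 / 2 : ℝ) • ((2 : ℝ) • (Dh * (Dt - At) * Dh * U)) = Dh * At * Dh * U :=
  stmt13_general n d A h01 deg hdeg At Dt Dh hDt hDh U
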